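/- Let Q > 0 and t₁ be real numbers, and define ψ : ℝ × ℝ → ℝ by ψ(t,x) = (Q(t₁ - t) + 1)^{-1/2} · exp(-Q (log x)² / (2(Q(t₁ - t) + 1))). Then for every t ≤ t₁ and every x > 0, ψ satisfies the linear backward equation ∂_t ψ(t,x) + (x/2) ∂_x ψ(t,x) + (1/2) x² ∂_{xx} ψ(t,x) = 0, together with the boundary condition ψ(t₁, x) = exp(-(Q/2)(log x)²). -/

import Mathlib

/-- Exponentiated negative cost-to-go `ψ = e^{-J}` of the geometric Brownian motion
control problem. -/
noncomputable def gbmPsi (Q t₁ : ℝ) : ℝ × ℝ → ℝ := fun p =>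
  (Q * (t₁ - p.1) + 1) ^ (-(1 / 2 : ℝ)) *
    Real.exp (-(Q * (Real.log p.2) ^ 2) / (2 * (Q * (t₁ - p.1) + 1)))

/-! In the variable `z = log x` the operator `(x/2)∂ₓ + (x²/2)∂ₓₓ` becomes `(1/2)∂_zz`. With
`a = Q(t₁ - t) + 1`, `ψ(t, eᶻ) = a^{-1/2} exp(-Q z²/(2a))` is a constant multiple of the heat kernel
at time `a / Q = t₁ - t + 1/Q`, which decreases at unit rate in `t`; hence it solves the backward heat
equation `∂ₜu + (1/2)∂_zz u = 0`, and the terminal condition is the value at `a = 1`. -/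

open Real Filter Topology

theorem euler_operator_comp_log {u u' : ℝ → ℝ} {x u'' : ℝ} (hx : 0 < x)
    (hu : ∀ z, HasDerivAt u (u' z) z) (hu' : HasDerivAt u' u'' (log x)) :
    x / 2 * deriv (fun y => u (log y)) x + 1 / 2 * x ^ 2 * deriv (deriv (fun y => u (log y))) x =
      u'' / 2 := by
  have hcomp : ∀ y ≠ 0, HasDerivAt (fun y => u (log y)) (u' (log y) * y⁻¹) y := fun y hy =>
    (hu (log y)).comp y (hasDerivAt_log hy)
  have hderiv : deriv (fun y => u (log y)) =ᶠ[𝓝 x] fun y => u' (log y) * y⁻¹ := by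
    filter_upwards [Ioi_mem_nhds hx] with y hy
    exact (hcomp y (ne_of_gt hy)).deriv
  have hderiv2 : HasDerivAt (fun y => u' (log y) * y⁻¹)
      (u'' * x⁻¹ * x⁻¹ + u' (log x) * -(x ^ 2)⁻¹) x :=
    (hu'.comp x (hasDerivAt_log hx.ne')).mul (hasDerivAt_inv hx.ne')
  rw [(hcomp x hx.ne').deriv, hderiv.deriv_eq, hderiv2.deriv]
  field_simp
  ring

noncomputable def gaussProfile (Q a z : ℝ) : ℝ :=
  a ^ (-(1 / 2 : ℝ)) * exp (-(Q * z ^ 2) / (2 * a))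

section gaussProfile

variable (Q : ℝ)

theorem hasDerivAt_gaussProfile (a z : ℝ) :
    HasDerivAt (gaussProfile Q a) (-(Q * z / a) * gaussProfile Q a z) z := by
  have hexponent : HasDerivAt (fun w => -(Q * w ^ 2) / (2 * a)) (-(Q * z / a)) z :=
    ((((hasDerivAt_pow 2 z).const_mul Q).neg).div_const (2 * a)).congr_deriv <| by
      simp only [Nat.cast_ofNat, Nat.add_one_sub_one, pow_one]
      ring
  exact (hexponent.exp.const_mul (a ^ (-(1 / 2 : ℝ)))).congr_deriv (by rw [gaussProfile]; ring)

theorem hasDerivAt_deriv_gaussProfile (a z : ℝ) :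
    HasDerivAt (fun z => -(Q * z / a) * gaussProfile Q a z)
      ((Q ^ 2 * z ^ 2 / a ^ 2 - Q / a) * gaussProfile Q a z) z :=
  ((((hasDerivAt_id' z).const_mul Q).div_const a).neg.mul
    (hasDerivAt_gaussProfile Q a z)).congr_deriv (by simp only [Pi.neg_apply]; ring)

theorem hasDerivAt_gaussProfile_variance {a : ℝ} (ha : 0 < a) (z : ℝ) :
    HasDerivAt (fun b => gaussProfile Q b z)
      ((Q * z ^ 2 / (2 * a ^ 2) - 1 / (2 * a)) * gaussProfile Q a z) a := by
  have hexponent : HasDerivAt (fun b => -(Q * z ^ 2) / (2 * b)) (Q * z ^ 2 / (2 * a ^ 2)) a :=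
    ((hasDerivAt_const a (-(Q * z ^ 2))).div ((hasDerivAt_id' a).const_mul 2)
      (by positivity)).congr_deriv (by field_simp; ring)
  refine ((hasDerivAt_rpow_const (p := -(1 / 2 : ℝ)) (Or.inl ha.ne')).mul
    hexponent.exp).congr_deriv ?_
  rw [gaussProfile, rpow_sub ha, rpow_one]
  field_simp
  ring

theorem hasDerivAt_gaussProfile_backward_heat {t₁ t : ℝ} (ha : 0 < Q * (t₁ - t) + 1) (z : ℝ) :
    HasDerivAt (fun s => gaussProfile Q (Q * (t₁ - s) + 1) z)
      (-((Q ^ 2 * z ^ 2 / (Q * (t₁ - t) + 1) ^ 2 - Q / (Q * (t₁ - t) + 1)) *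
        gaussProfile Q (Q * (t₁ - t) + 1) z) / 2) t := by
  have hvariance : HasDerivAt (fun s => Q * (t₁ - s) + 1) (-Q) t := by
    simpa using (((hasDerivAt_id t).const_sub t₁).const_mul Q).add_const 1
  refine ((hasDerivAt_gaussProfile_variance Q ha z).comp t hvariance).congr_deriv ?_
  field_simp

end gaussProfile

theorem gbmPsi_eq_gaussProfile (Q t₁ t x : ℝ) :
    gbmPsi Q t₁ (t, x) = gaussProfile Q (Q * (t₁ - t) + 1) (log x) :=
  rfl

/-- `ψ(t,x) = (Q(t₁-t)+1)^{-1/2} exp(-Q(log x)²/(2(Q(t₁-t)+1)))` satisfies the linear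
backward equation `∂ₜψ + (x/2)∂ₓψ + (1/2)x² ∂ₓₓψ = 0` of the geometric Brownian motion
control problem for all `t ≤ t₁`, `x > 0`, with boundary condition
`ψ(t₁,x) = exp(-(Q/2)(log x)²)`. -/
theorem gbm_linear_backward (Q t₁ : ℝ) (hQ : 0 < Q) :
    ∀ t ≤ t₁, ∀ x > 0,
      (deriv (fun s => gbmPsi Q t₁ (s, x)) t +
          (x / 2) * deriv (fun y => gbmPsi Q t₁ (t, y)) x +
          (1 / 2 : ℝ) * x ^ 2 * deriv (deriv (fun y => gbmPsi Q t₁ (t, y))) x = 0) ∧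
      gbmPsi Q t₁ (t₁, x) = Real.exp (-(Q / 2) * (Real.log x) ^ 2) := by
  intro t ht x hx
  have ha : 0 < Q * (t₁ - t) + 1 := by nlinarith
  simp only [gbmPsi_eq_gaussProfile]
  refine ⟨?_, ?_⟩
  · rw [add_assoc, (hasDerivAt_gaussProfile_backward_heat Q ha (log x)).deriv,
      euler_operator_comp_log hx (hasDerivAt_gaussProfile Q _)
        (hasDerivAt_deriv_gaussProfile Q _ (log x))]
    ring
  · rw [sub_self, mul_zero, zero_add, gaussProfile, one_rpow, one_mul]
    congr 1
    ring
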